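/- arXiv:2001.06686 — 5 statements merged into one kernel-verified Lean document; each statement's English description precedes it below -/
import Mathlib

section
/- Let E be a lattice effect algebra with natural implication x→y := y+(x∨y)'. Then the identity (x→y)→y = x∨y holds for all x,y ∈ E. -/
/-- An effect algebra `(E,+,',0,1)`.  The partial addition is encoded by a total
function `add` together with a definedness predicate `D`; the axioms only
constrain `add` on defined pairs. -/
structure EffectAlgebra (E : Type*) where
  /-- definedness predicate for the partial addition -/
  D : E → E → Prop
  /-- the (partial) addition -/
  add : E → E → E
  /-- the complementation `x ↦ x'` -/
  compl : E → E
  zero : E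
  one : E
  /-- (E1) -/
  comm_def : ∀ {a b : E}, D a b → D b a
  comm : ∀ {a b : E}, D a b → add a b = add b a
  /-- (E2): `(a+b)+c` is defined iff `a+(b+c)` is defined -/
  assoc_def : ∀ a b c : E, (D a b ∧ D (add a b) c) ↔ (D b c ∧ D a (add b c))
  assoc : ∀ a b c : E, D a b → D (add a b) c → add (add a b) c = add a (add b c)
  /-- (E3): `a + b` is defined and equals `1` iff `b = a'` -/
  orth : ∀ a b : E, (D a b ∧ add a b = one) ↔ b = compl a
  /-- (E4) -/
  one_add : ∀ a : E, D one a → a = zero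

/-- The induced order of an effect algebra: `a ≤ b` iff `a + c = b` for some `c`. -/
def EffectAlgebra.le {E : Type*} (A : EffectAlgebra E) (a b : E) : Prop :=
  ∃ c, A.D a c ∧ A.add a c = b

/-- A lattice effect algebra: an effect algebra whose induced order is a lattice. -/
structure LatticeEffectAlgebra (E : Type*) extends EffectAlgebra E where
  sup : E → E → E
  inf : E → E → E
  le_sup_left : ∀ a b : E, toEffectAlgebra.le a (sup a b)
  le_sup_right : ∀ a b : E, toEffectAlgebra.le b (sup a b)
  sup_le : ∀ a b c : E, toEffectAlgebra.le a c → toEffectAlgebra.le b c →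
    toEffectAlgebra.le (sup a b) c
  inf_le_left : ∀ a b : E, toEffectAlgebra.le (inf a b) a
  inf_le_right : ∀ a b : E, toEffectAlgebra.le (inf a b) b
  le_inf : ∀ a b c : E, toEffectAlgebra.le c a → toEffectAlgebra.le c b →
    toEffectAlgebra.le c (inf a b)

/-- The natural implication `x → y := y + (x ∨ y)'` of a lattice effect algebra.
(The sum is always defined since `(x ∨ y)' ≤ y'`.) -/
def LatticeEffectAlgebra.imp {E : Type*} (L : LatticeEffectAlgebra E) (x y : E) : E :=
  L.add y (L.compl (L.sup x y))

namespace EffectAlgebra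

variable {E : Type*} (A : EffectAlgebra E)

lemma D_compl (a : E) : A.D a (A.compl a) := ((A.orth a (A.compl a)).mpr rfl).1

lemma add_compl (a : E) : A.add a (A.compl a) = A.one := ((A.orth a (A.compl a)).mpr rfl).2

lemma compl_compl (a : E) : A.compl (A.compl a) = a :=
  ((A.orth (A.compl a) a).mp ⟨A.comm_def (A.D_compl a),
    (A.comm (A.D_compl a)).symm.trans (A.add_compl a)⟩).symm

lemma D_compl' (a : E) : A.D (A.compl a) a := A.comm_def (A.D_compl a)

lemma compl_add (a : E) : A.add (A.compl a) a = A.one :=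
  (A.comm (A.D_compl a)).symm.trans (A.add_compl a)

lemma compl_one : A.compl A.one = A.zero := A.one_add _ (A.D_compl A.one)

lemma D_one_zero : A.D A.one A.zero := A.compl_one ▸ A.D_compl A.one

lemma add_one_zero : A.add A.one A.zero = A.one := A.compl_one ▸ A.add_compl A.one

lemma D_zero (a : E) : A.D a A.zero ∧ A.add a A.zero = a := by
  have h1 : A.D (A.compl a) a := A.D_compl' a
  have h2 : A.D (A.add (A.compl a) a) A.zero := by
    rw [A.compl_add]; exact A.D_one_zero
  have h3 := (A.assoc_def (A.compl a) a A.zero).mp ⟨h1, h2⟩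
  have h4 : A.add (A.add (A.compl a) a) A.zero = A.add (A.compl a) (A.add a A.zero) :=
    A.assoc _ _ _ h1 h2
  rw [A.compl_add, A.add_one_zero] at h4
  have h5 := (A.orth (A.compl a) (A.add a A.zero)).mp ⟨h3.2, h4.symm⟩
  rw [A.compl_compl] at h5
  exact ⟨h3.1, h5⟩

lemma le_refl (a : E) : A.le a a := ⟨A.zero, (A.D_zero a).1, (A.D_zero a).2⟩

/-- From `a + b` defined with value `s`, `b + s' = a'`. -/
lemma add_compl_eq (a b : E) (h : A.D a b) :
    A.D b (A.compl (A.add a b)) ∧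
      A.add b (A.compl (A.add a b)) = A.compl a := by
  set s := A.add a b with hs
  have h2 : A.D s (A.compl s) := A.D_compl s
  have h3 := (A.assoc_def a b (A.compl s)).mp ⟨h, h2⟩
  have h4 : A.add (A.add a b) (A.compl s) = A.add a (A.add b (A.compl s)) :=
    A.assoc _ _ _ h h2
  rw [← hs, A.add_compl] at h4
  exact ⟨h3.1, (A.orth a (A.add b (A.compl s))).mp ⟨h3.2, h4.symm⟩⟩

lemma cancel {a b c : E} (hb : A.D a b) (hc : A.D a c)
    (h : A.add a b = A.add a c) : b = c := by
  have e1 := A.add_compl_eq a b hb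
  have e2 := A.add_compl_eq a c hc
  rw [← h] at e2
  -- b + s' = c + s' = a', where s = a + b
  have f1 := A.add_compl_eq b (A.compl (A.add a b)) e1.1
  have f2 := A.add_compl_eq c (A.compl (A.add a b)) e2.1
  rw [e1.2] at f1
  rw [e2.2] at f2
  have : A.compl b = A.compl c := by rw [← f1.2, ← f2.2]
  calc b = A.compl (A.compl b) := (A.compl_compl b).symm
    _ = A.compl (A.compl c) := by rw [this]
    _ = c := A.compl_compl c

lemma eq_zero_of_add_eq_zero {a b : E} (h : A.D a b) (h0 : A.add a b = A.zero) :
    a = A.zero := by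
  have h1 : A.D (A.add a b) A.one := by rw [h0]; exact A.comm_def A.D_one_zero
  have h2 := (A.assoc_def a b A.one).mp ⟨h, h1⟩
  have hb : b = A.zero := A.one_add b (A.comm_def h2.1)
  rw [hb, (A.D_zero a).2] at h0
  exact h0

lemma le_antisymm {a b : E} (hab : A.le a b) (hba : A.le b a) : a = b := by
  obtain ⟨u, hu, hau⟩ := hab
  obtain ⟨v, hv, hbv⟩ := hba
  have h1 : A.D (A.add a u) v := by rw [hau]; exact hv
  have h2 := (A.assoc_def a u v).mp ⟨hu, h1⟩
  have h3 : A.add (A.add a u) v = A.add a (A.add u v) := A.assoc _ _ _ hu h1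
  rw [hau, hbv] at h3
  have h4 : A.add a (A.add u v) = A.add a A.zero := by
    rw [(A.D_zero a).2]; exact h3.symm
  have h5 : A.add u v = A.zero := A.cancel h2.2 (A.D_zero a).1 h4
  have hu0 : u = A.zero := A.eq_zero_of_add_eq_zero h2.1 h5
  rw [hu0, (A.D_zero a).2] at hau
  exact hau

lemma D_of_le_compl {a b : E} (h : A.le a (A.compl b)) : A.D a b := by
  obtain ⟨c, hc, hac⟩ := h
  have h1 : A.D (A.add a c) b := by rw [hac]; exact A.D_compl' b
  have h2 := (A.assoc_def a c b).mp ⟨hc, h1⟩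
  have h3 : A.D a (A.add b c) := by
    rw [A.comm h2.1] at h2; exact h2.2
  exact ((A.assoc_def a b c).mpr ⟨A.comm_def h2.1, h3⟩).1

end EffectAlgebra

namespace LatticeEffectAlgebra

variable {E : Type*} (L : LatticeEffectAlgebra E)

lemma sup_eq_left {a b : E} (h : L.toEffectAlgebra.le b a) : L.sup a b = a :=
  L.toEffectAlgebra.le_antisymm
    (L.sup_le a b a (L.toEffectAlgebra.le_refl a) h) (L.le_sup_left a b)

end LatticeEffectAlgebra

/-- Theorem 2.2 (iv): `(x → y) → y = x ∨ y`. -/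
theorem imp_imp_eq_sup {E : Type*} (L : LatticeEffectAlgebra E) (x y : E) :
    L.imp (L.imp x y) y = L.sup x y := by
  set A := L.toEffectAlgebra with hA
  set u := L.sup x y with hu
  -- `y + u'` is defined since `y ≤ u = u''`
  have hyu : A.le y u := L.le_sup_right x y
  have hDyu' : A.D y (A.compl u) := by
    apply A.D_of_le_compl
    rw [A.compl_compl]
    exact hyu
  set i := A.add y (A.compl u) with hi
  have himp : L.imp x y = i := rfl
  -- y ≤ i, hence sup i y = i
  have hyi : A.le y i := ⟨A.compl u, hDyu', rfl⟩
  have hsup : L.sup i y = i := L.sup_eq_left hyi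
  -- u' + i' = y'
  have h1 : A.D (A.add y (A.compl u)) (A.compl i) := by rw [← hi]; exact A.D_compl i
  have h2 := (A.assoc_def y (A.compl u) (A.compl i)).mp ⟨hDyu', h1⟩
  have h3 : A.add (A.add y (A.compl u)) (A.compl i)
      = A.add y (A.add (A.compl u) (A.compl i)) := A.assoc _ _ _ hDyu' h1
  rw [← hi, A.add_compl] at h3
  have h4 : A.add (A.compl u) (A.compl i) = A.compl y :=
    (A.orth y _).mp ⟨h2.2, h3.symm⟩
  -- i' + y = u
  have h5 : A.D (A.add (A.compl u) (A.compl i)) y := by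
    rw [h4]; exact A.D_compl' y
  have h6 := (A.assoc_def (A.compl u) (A.compl i) y).mp ⟨h2.1, h5⟩
  have h7 : A.add (A.add (A.compl u) (A.compl i)) y
      = A.add (A.compl u) (A.add (A.compl i) y) := A.assoc _ _ _ h2.1 h5
  rw [h4, A.compl_add] at h7
  have h8 : A.add (A.compl i) y = A.compl (A.compl u) :=
    (A.orth (A.compl u) _).mp ⟨h6.2, h7.symm⟩
  rw [A.compl_compl] at h8
  -- conclude
  show A.add y (A.compl (L.sup (L.imp x y) y)) = u
  rw [himp, hsup, A.comm (A.comm_def h6.1), h8]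
end

section
/- Let I = (I,→,0) be a lattice effect implication algebra. Put x' := x→0, 1 := 0', and define a partial operation + by: x+y is defined iff x→y' = 1, and in that case x+y := x'→y. Then (I,+,',0,1) is a lattice effect algebra whose induced order ≤ satisfies: x ≤ y iff x→y = 1, with lattice operations x∨y = (x→y)→y and x∧y = (x'∨y')'. -/
/-- A lattice effect implication algebra `(I,→,0)`.  Below, `imp x zero` plays the
role of `x'` and `imp zero zero` plays the role of `1 = 0'`. -/
structure LatticeEffectImplicationAlgebra (I : Type*) where
  imp : I → I → I
  zero : I
  /-- (i) `0→x = x→x = x→1 = 1` -/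
  ax_i : ∀ x, imp zero x = imp zero zero ∧ imp x x = imp zero zero ∧
    imp x (imp zero zero) = imp zero zero
  /-- (ii) -/
  ax_ii : ∀ x y, imp x y = imp zero zero → imp y x = imp zero zero → x = y
  /-- (iii) -/
  ax_iii : ∀ x y z, imp x y = imp zero zero → imp y z = imp zero zero →
    imp x z = imp zero zero
  /-- (iv) `x→y = 1` implies `y'→x' = 1` -/
  ax_iv : ∀ x y, imp x y = imp zero zero → imp (imp y zero) (imp x zero) = imp zero zero
  /-- (v) `x'' = x` -/
  ax_v : ∀ x, imp (imp x zero) zero = x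
  /-- (vi) `x→((x→y)→y) = 1` -/
  ax_vi : ∀ x y, imp x (imp (imp x y) y) = imp zero zero
  /-- (vii) `y→((x→y)→y) = 1` -/
  ax_vii : ∀ x y, imp y (imp (imp x y) y) = imp zero zero
  /-- (viii) -/
  ax_viii : ∀ x y z, imp x z = imp zero zero → imp y z = imp zero zero →
    imp (imp (imp x y) y) z = imp zero zero
  /-- (ix) `x→y = 1` implies `y→x = x'→y'` -/
  ax_ix : ∀ x y, imp x y = imp zero zero → imp y x = imp (imp x zero) (imp y zero)
  /-- (x), the equivalence part -/
  ax_x_iff : ∀ x y z,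
    (imp x (imp y zero) = imp zero zero ∧
      imp (imp (imp x zero) y) (imp z zero) = imp zero zero) ↔
    (imp y (imp z zero) = imp zero zero ∧
      imp x (imp (imp (imp y zero) z) zero) = imp zero zero)
  /-- (x), the equality part: in this case `(x'→y)'→z = x'→(y'→z)` -/
  ax_x_eq : ∀ x y z,
    imp x (imp y zero) = imp zero zero →
    imp (imp (imp x zero) y) (imp z zero) = imp zero zero →
    imp (imp (imp (imp x zero) y) zero) z = imp (imp x zero) (imp (imp y zero) z)
  /-- (xi) `y'→((x→y)→y)' = x→y` -/
  ax_xi : ∀ x y, imp (imp y zero) (imp (imp (imp x y) y) zero) = imp x y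
  /-- (xii) `x→(y→x) = 1` -/
  ax_xii : ∀ x y, imp x (imp y x) = imp zero zero

namespace LEIAProof

variable {I : Type*}

private lemma refl1 (J : LatticeEffectImplicationAlgebra I) (x : I) :
    J.imp x x = J.imp J.zero J.zero := (J.ax_i x).2.1

private lemma to_one (J : LatticeEffectImplicationAlgebra I) (x : I) :
    J.imp x (J.imp J.zero J.zero) = J.imp J.zero J.zero := (J.ax_i x).2.2

private lemma comm_lem (J : LatticeEffectImplicationAlgebra I) {a b : I}
    (h : J.imp a (J.imp b J.zero) = J.imp J.zero J.zero) :
    J.imp (J.imp a J.zero) b = J.imp (J.imp b J.zero) a := by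
  have h1 := J.ax_ix a (J.imp b J.zero) h
  rw [J.ax_v b] at h1
  exact h1.symm

private lemma supEq (J : LatticeEffectImplicationAlgebra I) {x y : I}
    (h : J.imp x y = J.imp J.zero J.zero) :
    J.imp (J.imp y x) x = y :=
  J.ax_ii _ _ (J.ax_viii y x y (refl1 J y) h) (J.ax_vi y x)

private lemma addEq (J : LatticeEffectImplicationAlgebra I) {x y : I}
    (h : J.imp x y = J.imp J.zero J.zero) :
    J.imp (J.imp x J.zero) (J.imp (J.imp y x) J.zero) = y := by
  have h1 := J.ax_xi (J.imp y x) x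
  rw [supEq J h] at h1
  exact h1

private def EA (J : LatticeEffectImplicationAlgebra I) : EffectAlgebra I where
  D x y := J.imp x (J.imp y J.zero) = J.imp J.zero J.zero
  add x y := J.imp (J.imp x J.zero) y
  compl x := J.imp x J.zero
  zero := J.zero
  one := J.imp J.zero J.zero
  comm_def {a b} h := by
    have h1 := J.ax_iv a (J.imp b J.zero) h
    rw [J.ax_v b] at h1
    exact h1
  comm {a b} h := comm_lem J h
  assoc_def := J.ax_x_iff
  assoc := J.ax_x_eq
  orth a b := by
    constructor
    · rintro ⟨h1, h2⟩
      have h3 := J.ax_iv a (J.imp b J.zero) h1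
      rw [J.ax_v b] at h3
      exact (J.ax_ii (J.imp a J.zero) b h2 h3).symm
    · rintro rfl
      refine ⟨?_, refl1 J _⟩
      show J.imp a (J.imp (J.imp a J.zero) J.zero) = J.imp J.zero J.zero
      rw [J.ax_v a]
      exact refl1 J a
  one_add a h := by
    have h2 : J.imp (J.imp a J.zero) (J.imp J.zero J.zero) = J.imp J.zero J.zero :=
      to_one J _
    have h3 := J.ax_ii _ _ h h2
    have h4 : J.imp (J.imp a J.zero) J.zero = J.zero := by
      rw [← h3]; exact J.ax_v J.zero
    exact (J.ax_v a).symm.trans h4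

private lemma le_iff (J : LatticeEffectImplicationAlgebra I) (x y : I) :
    (EA J).le x y ↔ J.imp x y = J.imp J.zero J.zero := by
  constructor
  · rintro ⟨c, hD, hadd⟩
    have hD' : J.imp x (J.imp c J.zero) = J.imp J.zero J.zero := hD
    have hadd' : J.imp (J.imp x J.zero) c = y := hadd
    rw [← hadd', comm_lem J hD']
    exact J.ax_xii x (J.imp c J.zero)
  · intro h
    refine ⟨J.imp (J.imp y x) J.zero, ?_, addEq J h⟩
    show J.imp x (J.imp (J.imp (J.imp y x) J.zero) J.zero) = _
    rw [J.ax_v (J.imp y x)]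
    exact J.ax_xii x y

private def LEA (J : LatticeEffectImplicationAlgebra I) : LatticeEffectAlgebra I :=
  { EA J with
    sup := fun a b => J.imp (J.imp a b) b
    inf := fun a b => J.imp (J.imp (J.imp (J.imp a J.zero) (J.imp b J.zero))
      (J.imp b J.zero)) J.zero
    le_sup_left := fun a b => (le_iff J _ _).mpr (J.ax_vi a b)
    le_sup_right := fun a b => (le_iff J _ _).mpr (J.ax_vii a b)
    sup_le := fun a b c ha hb => (le_iff J _ _).mpr
      (J.ax_viii a b c ((le_iff J _ _).mp ha) ((le_iff J _ _).mp hb))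
    inf_le_left := fun a b => (le_iff J _ _).mpr (by
      have h1 := J.ax_iv (J.imp a J.zero)
        (J.imp (J.imp (J.imp a J.zero) (J.imp b J.zero)) (J.imp b J.zero))
        (J.ax_vi (J.imp a J.zero) (J.imp b J.zero))
      rw [J.ax_v a] at h1
      exact h1)
    inf_le_right := fun a b => (le_iff J _ _).mpr (by
      have h1 := J.ax_iv (J.imp b J.zero)
        (J.imp (J.imp (J.imp a J.zero) (J.imp b J.zero)) (J.imp b J.zero))
        (J.ax_vii (J.imp a J.zero) (J.imp b J.zero))
      rw [J.ax_v b] at h1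
      exact h1)
    le_inf := fun a b c hca hcb => (le_iff J _ _).mpr (by
      have ha := J.ax_iv c a ((le_iff J _ _).mp hca)
      have hb := J.ax_iv c b ((le_iff J _ _).mp hcb)
      have hs := J.ax_viii (J.imp a J.zero) (J.imp b J.zero) (J.imp c J.zero) ha hb
      have h1 := J.ax_iv _ _ hs
      rw [J.ax_v c] at h1
      exact h1) }

end LEIAProof

/-- Theorem 2.5: every lattice effect implication algebra `(I,→,0)` gives rise to a
lattice effect algebra with `x' := x → 0`, `1 := 0'`, and `x + y := x' → y`
defined iff `x → y' = 1`; its induced order satisfies `x ≤ y` iff `x → y = 1`,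
and its lattice operations are `x ∨ y = (x → y) → y`, `x ∧ y = (x' ∨ y')'`. -/
theorem implicationAlgebra_to_latticeEffectAlgebra {I : Type*}
    (J : LatticeEffectImplicationAlgebra I) :
    ∃ L : LatticeEffectAlgebra I,
      (∀ x y : I, L.D x y ↔ J.imp x (J.imp y J.zero) = J.imp J.zero J.zero) ∧
      (∀ x y : I, L.D x y → L.add x y = J.imp (J.imp x J.zero) y) ∧
      (∀ x : I, L.compl x = J.imp x J.zero) ∧
      L.zero = J.zero ∧
      L.one = J.imp J.zero J.zero ∧
      (∀ x y : I, L.toEffectAlgebra.le x y ↔ J.imp x y = J.imp J.zero J.zero) ∧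
      (∀ x y : I, L.sup x y = J.imp (J.imp x y) y) ∧
      (∀ x y : I, L.inf x y = L.compl (L.sup (L.compl x) (L.compl y))) :=
  ⟨LEIAProof.LEA J, fun _ _ => Iff.rfl, fun _ _ _ => rfl, fun _ => rfl, rfl, rfl,
    LEIAProof.le_iff J, fun _ _ => rfl, fun _ _ => rfl⟩
end

section
/- Let I = (I,→,0) be a lattice effect implication algebra, let (I,+,',0,1) be the lattice effect algebra obtained by setting x' := x→0, 1 := 0', and x+y := x'→y whenever x→y' = 1 (undefined otherwise), and let ⇒ be the natural implication of this lattice effect algebra, x⇒y := y+(x∨y)'. Then ⇒ coincides with →, i.e. c⇒d = c→d for all c,d ∈ I. In other words, the implication algebra recovered from the lattice effect algebra associated with I equals I, so the correspondence between lattice effect algebras and lattice effect implication algebras is one-to-one. -/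
/-- Theorem 2.6, second half: if `L` is the lattice effect algebra obtained from a
lattice effect implication algebra `J` (i.e. `x + y := x' → y` defined iff
`x → y' = 1`, with `x' := x → 0`, `1 := 0'`), then the natural implication
`c ⇒ d := d + (c ∨ d)'` of `L` coincides with `→`; hence the correspondence
between lattice effect algebras and lattice effect implication algebras is
one-to-one. -/
theorem imp_reduct_of_induced_effectAlgebra_eq_self {I : Type*}
    (J : LatticeEffectImplicationAlgebra I) (L : LatticeEffectAlgebra I)
    (hD : ∀ x y : I, L.D x y ↔ J.imp x (J.imp y J.zero) = J.imp J.zero J.zero)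
    (hadd : ∀ x y : I, L.D x y → L.add x y = J.imp (J.imp x J.zero) y)
    (hcompl : ∀ x : I, L.compl x = J.imp x J.zero)
    (hzero : L.zero = J.zero)
    (hone : L.one = J.imp J.zero J.zero) :
    ∀ c d : I, L.imp c d = J.imp c d := by
  intro c d
  have hle : ∀ x y : I, L.le x y ↔ J.imp x y = J.imp J.zero J.zero := by
    intro x y
    constructor
    · rintro ⟨e, hDe, hae⟩
      have h1 : J.imp x (J.imp e J.zero) = J.imp J.zero J.zero := (hD x e).mp hDe
      have h2 := J.ax_ix x (J.imp e J.zero) h1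
      rw [J.ax_v e] at h2
      have h3 : y = J.imp (J.imp e J.zero) x := by
        rw [h2, ← hadd x e hDe, hae]
      rw [h3]
      exact J.ax_xii x (J.imp e J.zero)
    · intro h
      have hDxc : L.D x (J.imp (J.imp y x) J.zero) := by
        rw [hD, J.ax_v (J.imp y x)]
        exact J.ax_xii x y
      refine ⟨J.imp (J.imp y x) J.zero, hDxc, ?_⟩
      rw [hadd _ _ hDxc]
      have h2 := J.ax_ix x (J.imp y x) (J.ax_xii x y)
      rw [← h2]
      exact J.ax_ii _ _ (J.ax_viii y x y (J.ax_i y).2.1 h) (J.ax_vi y x)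
  have hs : L.sup c d = J.imp (J.imp c d) d := by
    apply J.ax_ii
    · exact (hle _ _).mp (L.sup_le c d _ ((hle _ _).mpr (J.ax_vi c d))
        ((hle _ _).mpr (J.ax_vii c d)))
    · exact J.ax_viii c d (L.sup c d) ((hle _ _).mp (L.le_sup_left c d))
        ((hle _ _).mp (L.le_sup_right c d))
  have hDs : L.D d (J.imp (J.imp (J.imp c d) d) J.zero) := by
    rw [hD, J.ax_v]
    exact J.ax_vii c d
  show L.add d (L.compl (L.sup c d)) = J.imp c d
  rw [hs, hcompl, hadd _ _ hDs, J.ax_xi]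
end

section
/- An algebra (I,→,0) with binary operation → and constant 0 (writing x' for x→0 and 1 for 0') is a lattice effect implication algebra if and only if it satisfies the following identities and quasi-identities for all x,y,z ∈ I: (1) x→(y→x) = 1; (2) ((x→y)→y)→((y→x)→x) = 1; (3) 0→x = 1; (4) x→x = 1; (5) if x = 1 and x→y = 1 then y = 1; (6) if x→y = 1 then (y→z)→(x→z) = 1; (7) if x→y = 1 then (x'→y')→(y→x) = 1; (8) if x→y = 1 and y→x = 1 then x = y; (9) if x→y' = 1 and (x'→y)→z' = 1 then ((x'→y)'→z)→(x'→(y'→z)) = 1. -/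
/-- Theorem 4.3: a binary operation `imp` with constant `z` (writing `x'` for
`imp x z` and `1` for `imp z z`) makes `(I, imp, z)` a lattice effect implication
algebra iff the identities and quasiidentities (1)--(9) hold. -/
theorem latticeEffectImplicationAlgebra_iff_quasivariety {I : Type*}
    (imp : I → I → I) (z : I) :
    (∃ J : LatticeEffectImplicationAlgebra I, J.imp = imp ∧ J.zero = z) ↔
    ((∀ x y : I, imp x (imp y x) = imp z z) ∧
     (∀ x y : I, imp (imp (imp x y) y) (imp (imp y x) x) = imp z z) ∧
     (∀ x : I, imp z x = imp z z) ∧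
     (∀ x : I, imp x x = imp z z) ∧
     (∀ x y : I, x = imp z z → imp x y = imp z z → y = imp z z) ∧
     (∀ x y w : I, imp x y = imp z z → imp (imp y w) (imp x w) = imp z z) ∧
     (∀ x y : I, imp x y = imp z z →
        imp (imp (imp x z) (imp y z)) (imp y x) = imp z z) ∧
     (∀ x y : I, imp x y = imp z z → imp y x = imp z z → x = y) ∧
     (∀ x y w : I, imp x (imp y z) = imp z z →
        imp (imp (imp x z) y) (imp w z) = imp z z →
        imp (imp (imp (imp (imp x z) y) z) w)
          (imp (imp x z) (imp (imp y z) w)) = imp z z)) := by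
  constructor
  · -- Forward direction: from the algebra structure, derive (1)-(9).
    rintro ⟨J, rfl, rfl⟩
    set f := J.imp with hf
    set o := J.zero with ho
    have axi : ∀ x, f o x = f o o ∧ f x x = f o o ∧ f x (f o o) = f o o := J.ax_i
    have axii : ∀ x y, f x y = f o o → f y x = f o o → x = y := J.ax_ii
    have axiii : ∀ x y w, f x y = f o o → f y w = f o o → f x w = f o o := J.ax_iii
    have axiv : ∀ x y, f x y = f o o → f (f y o) (f x o) = f o o := J.ax_iv
    have axv : ∀ x, f (f x o) o = x := J.ax_v
    have axvi : ∀ x y, f x (f (f x y) y) = f o o := J.ax_vi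
    have axvii : ∀ x y, f y (f (f x y) y) = f o o := J.ax_vii
    have axviii : ∀ x y w, f x w = f o o → f y w = f o o →
        f (f (f x y) y) w = f o o := J.ax_viii
    have axix : ∀ x y, f x y = f o o → f y x = f (f x o) (f y o) := J.ax_ix
    have axxeq : ∀ x y w, f x (f y o) = f o o →
        f (f (f x o) y) (f w o) = f o o →
        f (f (f (f x o) y) o) w = f (f x o) (f (f y o) w) := J.ax_x_eq
    have axxi : ∀ x y, f (f y o) (f (f (f x y) y) o) = f x y := J.ax_xi
    have axxii : ∀ x y, f x (f y x) = f o o := J.ax_xii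
    -- join evaluation: if p ≤ q then (q→p)→p = q
    have lub_eq : ∀ p q, f p q = f o o → f (f q p) p = q := fun p q h =>
      axii _ _ (axviii q p q ((axi q).2.1) h) (axvi q p)
    -- restricted monotonicity in the second argument
    have RM : ∀ p q c, f p q = f o o → f q c = f o o →
        f (f c p) (f c q) = f o o := by
      intro p q c hpq hqc
      have k1 : f c p = f (f p o) (f c o) := axix p c (axiii p q c hpq hqc)
      have k2 : f c q = f (f q o) (f c o) := axix q c hqc
      have cond1 : f (f (f q p) o) (f p o) = f o o := axiv p (f q p) (axxii p q)
      have cond2 : f (f (f (f (f q p) o) o) p) (f (f c o) o) = f o o := by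
        rw [axv (f q p), axv c, lub_eq p q hpq]; exact hqc
      have k3 := axxeq (f (f q p) o) p (f c o) cond1 cond2
      rw [axv (f q p), lub_eq p q hpq] at k3
      -- k3 : f (f q o) (f c o) = f (f q p) (f (f p o) (f c o))
      have E : f c q = f (f q p) (f c p) := by rw [k2, k3, ← k1]
      rw [E]; exact axxii (f c p) (f q p)
    refine ⟨axxii, ?_, fun x => (axi x).1, fun x => (axi x).2.1, ?_, ?_, ?_, axii, ?_⟩
    · -- (2)
      exact fun x y => axviii x y (f (f y x) x) (axvii y x) (axvi y x)
    · -- (5)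
      intro x y hx hxy
      subst hx
      exact (axii _ _ hxy ((axi y).2.2)).symm
    · -- (6)
      intro x y w hxy
      have l2 : f (f (f x w) w) (f (f y w) w) = f o o :=
        axviii x w _ (axiii _ _ _ hxy (axvi y w)) (axvii y w)
      have l3 := axiv _ _ l2
      have l4 : f (f (f (f x w) w) o) (f w o) = f o o :=
        axiv w (f (f x w) w) (axvii x w)
      have l5 := RM _ _ _ l3 l4
      rw [axxi x w, axxi y w] at l5
      exact l5
    · -- (7)
      intro x y hxy
      rw [← axix x y hxy]
      exact (axi (f y x)).2.1
    · -- (9)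
      intro x y w hA hB
      rw [axxeq x y w hA hB]
      exact (axi _).2.1
  · -- Backward direction: from (1)-(9), construct the structure.
    rintro ⟨q1, q2, q3, q4, q5, q6, q7, q8, q9⟩
    have mp : ∀ u, imp (imp z z) u = imp z z → u = imp z z := fun u h => q5 _ u rfl h
    have htrans : ∀ x y w, imp x y = imp z z → imp y w = imp z z →
        imp x w = imp z z := by
      intro x y w hxy hyw
      have h := q6 x y w hxy
      rw [hyw] at h
      exact mp _ h
    have top : ∀ x, imp x (imp z z) = imp z z := fun x => mp _ (q1 (imp z z) x)
    have one_imp : ∀ x, imp (imp z z) x = x := by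
      intro x
      have h := q2 x (imp z z)
      rw [top x, q4 (imp z z)] at h
      exact q8 _ _ (mp _ h) (q1 x (imp z z))
    have dne : ∀ x, imp (imp x z) z = x := by
      intro x
      have a1 := q2 x z
      rw [q3 x, one_imp x] at a1
      have a2 := q2 z x
      rw [q3 x, one_imp x] at a2
      exact q8 _ _ a1 a2
    have neg_le : ∀ x y, imp x y = imp z z →
        imp (imp y z) (imp x z) = imp z z := fun x y h => q6 x y z h
    have vii : ∀ x y, imp y (imp (imp x y) y) = imp z z := fun x y => q1 y (imp x y)
    have vi : ∀ x y, imp x (imp (imp x y) y) = imp z z :=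
      fun x y => htrans _ _ _ (q1 x (imp y x)) (q2 y x)
    have lub : ∀ x y w, imp x w = imp z z → imp y w = imp z z →
        imp (imp (imp x y) y) w = imp z z := by
      intro x y w hxw hyw
      have s2 : imp (imp (imp x y) y) (imp (imp w y) y) = imp z z :=
        q6 _ _ y (q6 x w y hxw)
      have s3 := q2 w y
      rw [hyw, one_imp w] at s3
      exact htrans _ _ _ s2 s3
    have lub_eq : ∀ p q, imp p q = imp z z → imp (imp q p) p = q := fun p q h =>
      q8 _ _ (lub q p q (q4 q) h) (vi q p)
    have comm : ∀ x y, imp x y = imp z z →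
        imp y x = imp (imp x z) (imp y z) := by
      intro x y h
      have r3 := q7 _ _ (neg_le x y h)
      rw [dne x, dne y] at r3
      exact q8 _ _ r3 (q7 x y h)
    have xi_el : ∀ x y, imp (imp (imp x y) y) y = imp x y := fun x y =>
      q8 _ _ (q6 x (imp (imp x y) y) y (vi x y)) (vi (imp x y) y)
    have ax_xi : ∀ x y, imp (imp y z) (imp (imp (imp x y) y) z) = imp x y := by
      intro x y
      have h := comm y (imp (imp x y) y) (vii x y)
      rw [xi_el x y] at h
      exact h.symm
    have id1 : ∀ s a, imp s a = imp z z →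
        imp (imp s z) (imp (imp a s) z) = a := by
      intro s a h
      have t3 := comm (imp (imp a s) z) (imp s z) (neg_le s (imp a s) (q1 s a))
      rw [dne (imp a s), dne s, lub_eq s a h] at t3
      exact t3
    have Aorth : ∀ m n, imp n (imp m z) = imp z z →
        imp m (imp (imp m z) n) = imp z z := by
      intro m n h
      have e := comm n (imp m z) h
      rw [dne m] at e
      rw [e]
      exact q1 m (imp n z)
    have RM : ∀ p q c, imp p q = imp z z → imp q c = imp z z →
        imp (imp c p) (imp c q) = imp z z := by
      intro p q c hpq hqc
      have m1 : imp (imp c p) (imp q p) = imp z z := q6 q c p hqc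
      have m2 := neg_le _ _ m1
      have m3 := Aorth (imp c p) (imp (imp q p) z) m2
      have cond1 : imp (imp c z) (imp p z) = imp z z :=
        neg_le p c (htrans p q c hpq hqc)
      have cond2 : imp (imp (imp (imp c z) z) p) (imp (imp (imp q p) z) z)
          = imp z z := by
        rw [dne c, dne (imp q p)]
        exact m1
      have m4 := q9 (imp c z) p (imp (imp q p) z) cond1 cond2
      rw [dne c, id1 p q hpq] at m4
      exact htrans _ _ _ m3 m4
    have crux : ∀ u v w, imp w u = imp z z → imp w v = imp z z →
        imp (imp u w) v = imp z z → imp (imp v w) u = imp z z := by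
      intro u v w hwu hwv h3
      have c1 := comm w v hwv
      have c3 := neg_le _ _ h3
      have c4 := neg_le _ _ (q1 w u)
      have c5 := RM _ _ _ c3 c4
      rw [← c1, id1 w u hwu] at c5
      exact c5
    have L2fwd : ∀ x y w, imp x (imp y z) = imp z z →
        imp (imp (imp x z) y) (imp w z) = imp z z →
        imp y (imp w z) = imp z z ∧
          imp x (imp (imp (imp y z) w) z) = imp z z := by
      intro x y w hA hB
      have f2 : imp y (imp w z) = imp z z :=
        htrans _ _ _ (q1 y (imp x z)) hB
      have f3 : imp y (imp x z) = imp z z := by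
        have h := neg_le _ _ hA
        rwa [dne y] at h
      have f4 := crux (imp x z) (imp w z) y f3 f2 hB
      have hw : imp w (imp y z) = imp z z := by
        have h := neg_le _ _ f2
        rwa [dne w] at h
      have f5 : imp (imp y z) w = imp (imp w z) y := by
        have h := comm w (imp y z) hw
        rwa [dne y] at h
      rw [← f5] at f4
      have f6 := neg_le _ _ f4
      rw [dne x] at f6
      exact ⟨f2, f6⟩
    have x_iff : ∀ x y w,
        (imp x (imp y z) = imp z z ∧
          imp (imp (imp x z) y) (imp w z) = imp z z) ↔
        (imp y (imp w z) = imp z z ∧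
          imp x (imp (imp (imp y z) w) z) = imp z z) := by
      intro x y w
      constructor
      · rintro ⟨hA, hB⟩
        exact L2fwd x y w hA hB
      · rintro ⟨hC, hD⟩
        have g1 : imp w (imp y z) = imp z z := by
          have h := neg_le _ _ hC
          rwa [dne w] at h
        have e : imp (imp y z) w = imp (imp w z) y := by
          have h := comm w (imp y z) g1
          rwa [dne y] at h
        have g2 : imp (imp (imp w z) y) (imp x z) = imp z z := by
          have h := neg_le _ _ hD
          rw [dne (imp (imp y z) w)] at h
          rwa [e] at h
        obtain ⟨r1, r2⟩ := L2fwd w y x g1 g2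
        have hx : imp x (imp y z) = imp z z := by
          have h := neg_le _ _ r1
          rwa [dne x] at h
        refine ⟨hx, ?_⟩
        have r3 : imp (imp (imp y z) x) (imp w z) = imp z z := by
          have h := neg_le _ _ r2
          rwa [dne (imp (imp y z) x)] at h
        have e2 : imp (imp y z) x = imp (imp x z) y := by
          have h := comm x (imp y z) hx
          rwa [dne y] at h
        rwa [e2] at r3
    have x_eq : ∀ x y w, imp x (imp y z) = imp z z →
        imp (imp (imp x z) y) (imp w z) = imp z z →
        imp (imp (imp (imp x z) y) z) w
          = imp (imp x z) (imp (imp y z) w) := by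
      intro x y w hA hB
      obtain ⟨E1, E2⟩ := L2fwd x y w hA hB
      have p1 : imp w (imp y z) = imp z z := by
        have h := neg_le _ _ E1
        rwa [dne w] at h
      have f3 : imp y (imp x z) = imp z z := by
        have h := neg_le _ _ hA
        rwa [dne y] at h
      have p2 := crux (imp x z) (imp w z) y f3 E1 hB
      have first := q9 x y w hA hB
      have second := q9 w y x p1 p2
      have e1 : imp (imp y z) w = imp (imp w z) y := by
        have h := comm w (imp y z) p1
        rwa [dne y] at h
      have e4 : imp (imp y z) x = imp (imp x z) y := by
        have h := comm x (imp y z) hA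
        rwa [dne y] at h
      have e2 : imp (imp (imp (imp y z) w) z) x
          = imp (imp x z) (imp (imp y z) w) := by
        have h := comm x (imp (imp (imp y z) w) z) E2
        rwa [dne (imp (imp y z) w)] at h
      have hw2 : imp w (imp (imp (imp x z) y) z) = imp z z := by
        have h := neg_le _ _ hB
        rwa [dne w] at h
      have e3 : imp (imp (imp (imp x z) y) z) w
          = imp (imp w z) (imp (imp x z) y) := by
        have h := comm w (imp (imp (imp x z) y) z) hw2
        rwa [dne (imp (imp x z) y)] at h
      rw [← e1, e4, e2, ← e3] at second
      exact q8 _ _ first second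
    exact ⟨⟨imp, z, fun x => ⟨q3 x, q4 x, top x⟩, q8, htrans, neg_le, dne,
      vi, vii, lub, comm, x_iff, x_eq, ax_xi, q1⟩, rfl, rfl⟩
end

section
/- Let I = (I,→,0) be an effect implication algebra. Put x' := x→0, 1 := 0', and define a partial operation + by: x+y is defined iff x→y' = 1, and in that case x+y := x'→y. Then (I,+,',0,1) is an effect algebra whose induced order satisfies the Ascending Chain Condition, and the induced order ≤ satisfies: x ≤ y iff x→y = 1. -/
/-- The lower cone `L(a,b) = {x : x ≤ a and x ≤ b}` (w.r.t. the induced order). -/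
def EffectAlgebra.lowerCone {E : Type*} (A : EffectAlgebra E) (a b : E) : Set E :=
  {x | A.le x a ∧ A.le x b}

/-- `Max S`: the set of maximal elements of `S` w.r.t. the induced order. -/
def EffectAlgebra.maxOf {E : Type*} (A : EffectAlgebra E) (S : Set E) : Set E :=
  {x | x ∈ S ∧ ∀ y ∈ S, A.le x y → x = y}

/-- The induced order satisfies the Ascending Chain Condition: there is no
infinite strictly ascending chain. -/
def EffectAlgebra.ACC {E : Type*} (A : EffectAlgebra E) : Prop :=
  ¬ ∃ f : ℕ → E, ∀ n : ℕ, A.le (f n) (f (n + 1)) ∧ f n ≠ f (n + 1)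

/-- The set-valued natural implication `a → b := {b + m : m ∈ Max L(a',b')}`
(each such sum is defined since `m ≤ b'`). -/
def EffectAlgebra.impSet {E : Type*} (A : EffectAlgebra E) (a b : E) : Set E :=
  (fun m => A.add b m) '' A.maxOf (A.lowerCone (A.compl a) (A.compl b))

/-- An effect implication algebra `(I,→,0)` (Definition 5.1 / Def. 2 of the paper).
Below, `imp x zero` plays the role of `x'` and `imp zero zero` plays the role of
`1 = 0'`. -/
structure EffectImplicationAlgebra (I : Type*) where
  imp : I → I → I
  zero : I
  /-- (i) `0→x = x→x = x→1 = 1` -/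
  ax_i : ∀ x, imp zero x = imp zero zero ∧ imp x x = imp zero zero ∧
    imp x (imp zero zero) = imp zero zero
  /-- (ii) -/
  ax_ii : ∀ x y, imp x y = imp zero zero → imp y x = imp zero zero → x = y
  /-- (iii) -/
  ax_iii : ∀ x y z, imp x y = imp zero zero → imp y z = imp zero zero →
    imp x z = imp zero zero
  /-- (iv) `x→y = 1` implies `y'→x' = 1` -/
  ax_iv : ∀ x y, imp x y = imp zero zero → imp (imp y zero) (imp x zero) = imp zero zero
  /-- (v) `x'' = x` -/
  ax_v : ∀ x, imp (imp x zero) zero = x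
  /-- (vi) `x→y = 1` implies `y→x = x'→y'` -/
  ax_vi : ∀ x y, imp x y = imp zero zero → imp y x = imp (imp x zero) (imp y zero)
  /-- (vii), the equivalence part -/
  ax_vii_iff : ∀ x y z,
    (imp x (imp y zero) = imp zero zero ∧
      imp (imp (imp x zero) y) (imp z zero) = imp zero zero) ↔
    (imp y (imp z zero) = imp zero zero ∧
      imp x (imp (imp (imp y zero) z) zero) = imp zero zero)
  /-- (vii), the equality part: in this case `(x'→y)'→z = x'→(y'→z)` -/
  ax_vii_eq : ∀ x y z,
    imp x (imp y zero) = imp zero zero →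
    imp (imp (imp x zero) y) (imp z zero) = imp zero zero →
    imp (imp (imp (imp x zero) y) zero) z = imp (imp x zero) (imp (imp y zero) z)
  /-- (viii) `x→(y→x) = 1` -/
  ax_viii : ∀ x y, imp x (imp y x) = imp zero zero
  /-- there is no infinite sequence of pairwise distinct elements with
  `aₙ → aₙ₊₁ = 1` for all `n` -/
  ax_no_chain : ¬ ∃ f : ℕ → I, Function.Injective f ∧
    ∀ n : ℕ, imp (f n) (f (n + 1)) = imp zero zero


section AuxEA
variable {E : Type*} (A : EffectAlgebra E)

lemma EffectAlgebra.d_compl (a : E) :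
    A.D a (A.compl a) ∧ A.add a (A.compl a) = A.one :=
  (A.orth a (A.compl a)).mpr rfl

lemma EffectAlgebra.compl_compl_s18 (a : E) : A.compl (A.compl a) = a := by
  have h := A.d_compl a
  have h2 : A.D (A.compl a) a := A.comm_def h.1
  have h3 : A.add (A.compl a) a = A.one := by rw [← A.comm h.1]; exact h.2
  exact ((A.orth (A.compl a) a).mp ⟨h2, h3⟩).symm

lemma EffectAlgebra.compl_inj {a b : E} (h : A.compl a = A.compl b) : a = b := by
  rw [← A.compl_compl_s18 a, h, A.compl_compl_s18]

/-- If `x + y'` is defined then `x ≤ y` (with witness `(x + y')'`). -/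
lemma EffectAlgebra.le_of_d_compl {x y : E} (h1 : A.D x (A.compl y)) : A.le x y := by
  set s := A.add x (A.compl y) with hs
  have h2 := A.d_compl s
  have h3 := (A.assoc_def x (A.compl y) (A.compl s)).mp ⟨h1, h2.1⟩
  have h4 : A.add x (A.add (A.compl y) (A.compl s)) = A.one := by
    rw [← A.assoc x (A.compl y) (A.compl s) h1 h2.1, ← hs, h2.2]
  have h5 : A.D (A.compl s) (A.compl y) := A.comm_def h3.1
  have h6 : A.D x (A.add (A.compl s) (A.compl y)) := by
    rw [← A.comm h3.1]; exact h3.2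
  have h7 := (A.assoc_def x (A.compl s) (A.compl y)).mpr ⟨h5, h6⟩
  have h8 : A.add (A.add x (A.compl s)) (A.compl y) = A.one := by
    rw [A.assoc x (A.compl s) (A.compl y) h7.1 h7.2, ← A.comm h3.1]; exact h4
  have h9 : A.compl y = A.compl (A.add x (A.compl s)) :=
    (A.orth (A.add x (A.compl s)) (A.compl y)).mp ⟨h7.2, h8⟩
  exact ⟨A.compl s, h7.1, (A.compl_inj h9).symm⟩

end AuxEA

section AuxEIA
variable {I : Type*} (J : EffectImplicationAlgebra I)

/-- The effect algebra built from an effect implication algebra. -/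
def EffectImplicationAlgebra.toEA : EffectAlgebra I where
  D x y := J.imp x (J.imp y J.zero) = J.imp J.zero J.zero
  add x y := J.imp (J.imp x J.zero) y
  compl x := J.imp x J.zero
  zero := J.zero
  one := J.imp J.zero J.zero
  comm_def {a b} h := by
    have h2 := J.ax_iv a (J.imp b J.zero) h
    rwa [J.ax_v b] at h2
  comm {a b} h := by
    have h2 := J.ax_vi a (J.imp b J.zero) h
    rw [J.ax_v b] at h2
    exact h2.symm
  assoc_def := J.ax_vii_iff
  assoc := J.ax_vii_eq
  orth a b := by
    constructor
    · rintro ⟨h1, h2⟩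
      have h3 := J.ax_iv a (J.imp b J.zero) h1
      rw [J.ax_v b] at h3
      exact (J.ax_ii (J.imp a J.zero) b h2 h3).symm
    · rintro rfl
      refine ⟨?_, (J.ax_i (J.imp a J.zero)).2.1⟩
      show J.imp a (J.imp (J.imp a J.zero) J.zero) = _
      rw [J.ax_v a]
      exact (J.ax_i a).2.1
  one_add a h := by
    have h2 : J.imp J.zero J.zero = J.imp a J.zero :=
      J.ax_ii _ _ h ((J.ax_i (J.imp a J.zero)).2.2)
    have h3 := J.ax_v a
    rw [← h2, J.ax_v J.zero] at h3
    exact h3.symm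

lemma EffectImplicationAlgebra.le_iff (x y : I) :
    J.toEA.le x y ↔ J.imp x y = J.imp J.zero J.zero := by
  constructor
  · rintro ⟨c, hD, rfl⟩
    rw [J.toEA.comm hD]
    exact J.ax_viii x (J.imp c J.zero)
  · intro h
    apply J.toEA.le_of_d_compl
    show J.imp x (J.imp (J.imp y J.zero) J.zero) = _
    rwa [J.ax_v y]

end AuxEIA

/-- Theorem 5.4: every effect implication algebra `(I,→,0)` gives rise to an
effect algebra with `x' := x → 0`, `1 := 0'`, and `x + y := x' → y` defined iff
`x → y' = 1`; this effect algebra satisfies the ACC and its induced order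
satisfies `x ≤ y` iff `x → y = 1`. -/
theorem effectImplicationAlgebra_to_effectAlgebra {I : Type*}
    (J : EffectImplicationAlgebra I) :
    ∃ A : EffectAlgebra I,
      (∀ x y : I, A.D x y ↔ J.imp x (J.imp y J.zero) = J.imp J.zero J.zero) ∧
      (∀ x y : I, A.D x y → A.add x y = J.imp (J.imp x J.zero) y) ∧
      (∀ x : I, A.compl x = J.imp x J.zero) ∧
      A.zero = J.zero ∧
      A.one = J.imp J.zero J.zero ∧
      A.ACC ∧
      (∀ x y : I, A.le x y ↔ J.imp x y = J.imp J.zero J.zero) := by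
  refine ⟨J.toEA, fun x y => Iff.rfl, fun x y _ => rfl, fun x => rfl, rfl, rfl, ?_, J.le_iff⟩
  rintro ⟨f, hf⟩
  have hstep : ∀ n, J.imp (f n) (f (n + 1)) = J.imp J.zero J.zero :=
    fun n => (J.le_iff _ _).mp (hf n).1
  apply J.ax_no_chain
  refine ⟨f, ?_, hstep⟩
  have hmono : ∀ m n, m ≤ n → J.imp (f m) (f n) = J.imp J.zero J.zero := by
    intro m n hmn
    induction n, hmn using Nat.le_induction with
    | base => exact (J.ax_i (f m)).2.1
    | succ n hmn ih => exact J.ax_iii _ _ _ ih (hstep n)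
  have key : ∀ a b, a < b → f a ≠ f b := by
    intro a b hab heq
    have h1 := hmono (a + 1) b hab
    rw [← heq] at h1
    exact (hf a).2 (J.ax_ii _ _ (hstep a) h1)
  intro a b heq
  rcases lt_trichotomy a b with h | h | h
  · exact absurd heq (key a b h)
  · exact h
  · exact absurd heq.symm (key b a h)
end
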